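/- arXiv:1601.00607 — 2 statements merged into one kernel-verified Lean document; each statement's English description precedes it below -/
import Mathlib

section
/- Let q₁, q₂, h ∈ ℂ[x,y,z] be homogeneous polynomials of degrees k, k, and d - mk respectively (m ≥ 2 an integer), and set g = q₁·q₂·∏_{i=3}^{m}(q₁ + tᵢq₂) with distinct tᵢ ∈ ℂ*, f = g·h. Define the 2-form ω = a·dq₁∧dq₂ + b·dq₁∧dh + c·dq₂∧dh with a = -m·h, b = -q₂, c = q₁. Then ω ∧ df = 0. -/
/-!
For fixed `u, v`, the map `w ↦ jac u v w` (that is, `du ∧ dv ∧ dw`) is a derivation. Let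
`J = jac q₁ q₂ h` and `g = q₁ q₂ ∏ (q₁ + tᵢ q₂)`, so `f = g h`. The derivation `jac q₁ q₂` kills
every member of the pencil `⟨q₁, q₂⟩`, while `E = q₁ · jac q₂ h - q₂ · jac q₁ h` kills `h` and
multiplies every member of the pencil by `J`. By the Leibniz rule `jac q₁ q₂ f = g J` and
`E f = m g h J`, and these cancel in `ω ∧ df = -m h · jac q₁ q₂ f + E f`.
-/

open MvPolynomial

/-- Partial derivative of a polynomial on `ℂ³`. -/
noncomputable def pd (i : Fin 3) (u : MvPolynomial (Fin 3) ℂ) : MvPolynomial (Fin 3) ℂ :=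
  MvPolynomial.pderiv i u

/-- The Jacobian determinant `J(u,v,w)` of three polynomials on `ℂ³`,
so that `du ∧ dv ∧ dw = jac u v w · dx∧dy∧dz`. -/
noncomputable def jac (u v w : MvPolynomial (Fin 3) ℂ) : MvPolynomial (Fin 3) ℂ :=
  Matrix.det !![pd 0 u, pd 1 u, pd 2 u; pd 0 v, pd 1 v, pd 2 v; pd 0 w, pd 1 w, pd 2 w]

/-- The components of the two-form `du ∧ dv` in the basis `(dy∧dz, dz∧dx, dx∧dy)`. -/
noncomputable def wedge2 (u v : MvPolynomial (Fin 3) ℂ) : Fin 3 → MvPolynomial (Fin 3) ℂ :=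
  ![pd 1 u * pd 2 v - pd 2 u * pd 1 v,
    pd 2 u * pd 0 v - pd 0 u * pd 2 v,
    pd 0 u * pd 1 v - pd 1 u * pd 0 v]

namespace Derivation

variable {R A : Type*} [CommSemiring R] [CommSemiring A] [Algebra R A]

theorem map_prod_of_forall_eq_mul {ι : Type*} (D : Derivation R A A) (s : Finset ι) (p : ι → A)
    (J : A) (hp : ∀ i ∈ s, D (p i) = p i * J) :
    D (∏ i ∈ s, p i) = s.card • ((∏ i ∈ s, p i) * J) := by
  classical
  induction s using Finset.induction_on with
  | empty => simp
  | @insert j s hj ih =>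
    rw [Finset.prod_insert hj, D.leibniz, ih fun i hi => hp i (Finset.mem_insert_of_mem hi),
      hp j (Finset.mem_insert_self j s), Finset.card_insert_of_notMem hj, smul_eq_mul,
      smul_eq_mul, nsmul_eq_mul, nsmul_eq_mul, Nat.cast_succ]
    ring

theorem map_pencil_prod {ι : Type*} (D : Derivation R A A) (q₁ q₂ J : A)
    (h₁ : D q₁ = q₁ * J) (h₂ : D q₂ = q₂ * J) (s : Finset ι) (c : ι → R) :
    D (q₁ * q₂ * ∏ i ∈ s, (q₁ + c i • q₂)) =
      (s.card + 2) • (q₁ * q₂ * (∏ i ∈ s, (q₁ + c i • q₂)) * J) := by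
  have hpencil : ∀ i ∈ s, D (q₁ + c i • q₂) = (q₁ + c i • q₂) * J := fun i _ => by
    rw [D.map_add, D.map_smul, h₁, h₂, add_mul, smul_mul_assoc]
  rw [D.leibniz, D.leibniz, D.map_prod_of_forall_eq_mul s _ J hpencil, h₁, h₂]
  simp only [smul_eq_mul, nsmul_eq_mul, Nat.cast_add, Nat.cast_ofNat]
  ring

end Derivation

theorem jac_expand (u v w : MvPolynomial (Fin 3) ℂ) :
    jac u v w = pd 0 u * pd 1 v * pd 2 w - pd 0 u * pd 2 v * pd 1 w
      - pd 1 u * pd 0 v * pd 2 w + pd 1 u * pd 2 v * pd 0 w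
      + pd 2 u * pd 0 v * pd 1 w - pd 2 u * pd 1 v * pd 0 w := by
  simp only [jac, Matrix.det_fin_three, Matrix.of_apply, Matrix.cons_val', Matrix.cons_val_zero,
    Matrix.cons_val_one, Matrix.cons_val, Matrix.cons_val_fin_one]

noncomputable def jacDerivation (u v : MvPolynomial (Fin 3) ℂ) :
    Derivation ℂ (MvPolynomial (Fin 3) ℂ) (MvPolynomial (Fin 3) ℂ) :=
  wedge2 u v 0 • pderiv 0 + wedge2 u v 1 • pderiv 1 + wedge2 u v 2 • pderiv 2

theorem jacDerivation_apply (u v w : MvPolynomial (Fin 3) ℂ) :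
    jacDerivation u v w = jac u v w := by
  simp only [jacDerivation, Derivation.coe_add, Derivation.coe_smul, Pi.add_apply, Pi.smul_apply,
    smul_eq_mul, wedge2, Matrix.cons_val_zero, Matrix.cons_val_one, Matrix.cons_val, jac_expand, pd]
  ring

section Jac

variable (u v w : MvPolynomial (Fin 3) ℂ)

theorem jac_self_left : jac u v u = 0 := by
  rw [jac_expand]; ring

theorem jac_self_right : jac u v v = 0 := by
  rw [jac_expand]; ring

theorem jac_rotate : jac v w u = jac u v w := by
  rw [jac_expand, jac_expand]; ring

theorem jac_swap_right : jac u w v = -jac u v w := by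
  rw [jac_expand, jac_expand]; ring

end Jac

theorem omega_wedge_df_eq_zero_general
    (m : ℕ) (hm : 2 ≤ m)
    (q₁ q₂ h f : MvPolynomial (Fin 3) ℂ)
    (t : Fin (m - 2) → ℂ)
    (hf : f = q₁ * q₂ * (∏ i, (q₁ + C (t i) * q₂)) * h) :
    (-(C (m : ℂ)) * h) * jac q₁ q₂ f + (-q₂) * jac q₁ h f + q₁ * jac q₂ h f = 0 := by
  subst hf
  set g := q₁ * q₂ * ∏ i, (q₁ + C (t i) * q₂)
  set J := jac q₁ q₂ h
  have hD : jac q₁ q₂ g = 0 := by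
    have := (jacDerivation q₁ q₂).map_pencil_prod q₁ q₂ 0
      (by rw [jacDerivation_apply, jac_self_left, mul_zero])
      (by rw [jacDerivation_apply, jac_self_right, mul_zero]) Finset.univ t
    simpa only [jacDerivation_apply, smul_eq_C_mul, mul_zero, smul_zero] using this
  have hE : q₁ * jac q₂ h g - q₂ * jac q₁ h g = m * (g * J) := by
    have := (q₁ • jacDerivation q₂ h - q₂ • jacDerivation q₁ h).map_pencil_prod q₁ q₂ J
      (by simp only [Derivation.sub_apply, Derivation.smul_apply, jacDerivation_apply,
        jac_rotate q₁ q₂ h, jac_self_left q₁ h, smul_eq_mul]; ring)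
      (by simp only [Derivation.sub_apply, Derivation.smul_apply, jacDerivation_apply,
        jac_swap_right q₁ q₂ h, jac_self_left q₂ h, smul_eq_mul]; ring) Finset.univ t
    simpa only [Derivation.sub_apply, Derivation.smul_apply, jacDerivation_apply, smul_eq_mul,
      smul_eq_C_mul, Finset.card_univ, Fintype.card_fin, Nat.sub_add_cancel hm,
      nsmul_eq_mul] using this
  have hJh (u v : MvPolynomial (Fin 3) ℂ) : jac u v (g * h) = g * jac u v h + h * jac u v g := by
    simpa only [jacDerivation_apply, smul_eq_mul] using (jacDerivation u v).leibniz g h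
  rw [hJh, hJh, hJh, hD, jac_self_right, jac_self_right, map_natCast]
  linear_combination h * hE

/-- The 2-form `ω = -mh·dq₁∧dq₂ - q₂·dq₁∧dh + q₁·dq₂∧dh` satisfies `ω ∧ df = 0`,
where `f = q₁q₂⋯q_m·h` is a product of `m` members of the pencil `⟨q₁,q₂⟩` times `h`.
The 3-form `ω ∧ df` equals the displayed polynomial times `dx∧dy∧dz`. -/
theorem omega_wedge_df_eq_zero
    (k d m : ℕ) (hm : 2 ≤ m) (hkd : m * k ≤ d)
    (q₁ q₂ h f : MvPolynomial (Fin 3) ℂ)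
    (hq₁ : q₁.IsHomogeneous k) (hq₂ : q₂.IsHomogeneous k)
    (hh : h.IsHomogeneous (d - m * k))
    (t : Fin (m - 2) → ℂ) (ht : Function.Injective t) (ht0 : ∀ i, t i ≠ 0)
    (hf : f = q₁ * q₂ * (∏ i, (q₁ + C (t i) * q₂)) * h) :
    (-(C (m : ℂ)) * h) * jac q₁ q₂ f + (-q₂) * jac q₁ h f + q₁ * jac q₂ h f = 0 :=
  omega_wedge_df_eq_zero_general m hm q₁ q₂ h f t hf
end

section
/- With the notation of the previous statements (q₁, q₂ homogeneous of degree k, h homogeneous of degree d-mk, ω = -mh·dq₁∧dq₂ - q₂·dq₁∧dh + q₁·dq₂∧dh), one has J(q₁,q₂,h)·Δ(dx∧dy∧dz) = k·ω + d·h·dq₁∧dq₂. -/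
/-!
By Euler's formula, contracting the differential of a homogeneous polynomial of degree `n`
with the Euler field gives `n` times the polynomial. Contracting
`dq₁ ∧ dq₂ ∧ dh = J · dx∧dy∧dz` therefore gives
`k q₁ dq₂∧dh - k q₂ dq₁∧dh + (d - m k) h dq₁∧dq₂`, which is `k ω + d h dq₁∧dq₂`.
-/

open MvPolynomial

open Matrix

/-- Contracting `a ∧ b ∧ c` with a vector `x` in three dimensions. -/
theorem det_smul_eq_dotProduct_smul_cross {R : Type*} [CommRing R] (a b c x : Fin 3 → R) :
    Matrix.det (Matrix.of ![a, b, c]) • x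
      = (a ⬝ᵥ x) • b ⨯₃ c + (b ⬝ᵥ x) • c ⨯₃ a + (c ⬝ᵥ x) • a ⨯₃ b := by
  ext i
  fin_cases i <;>
    simp [Matrix.det_fin_three, cross_apply, dotProduct, Fin.sum_univ_three] <;> ring

noncomputable def grad (u : MvPolynomial (Fin 3) ℂ) : Fin 3 → MvPolynomial (Fin 3) ℂ :=
  fun j => pd j u

theorem jac_eq_det_grad (u v w : MvPolynomial (Fin 3) ℂ) :
    jac u v w = Matrix.det (Matrix.of ![grad u, grad v, grad w]) := by
  rfl

theorem wedge2_eq_cross_grad (u v : MvPolynomial (Fin 3) ℂ) :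
    wedge2 u v = grad u ⨯₃ grad v := by
  ext i
  fin_cases i <;> simp [wedge2, grad, cross_apply]

theorem MvPolynomial.IsHomogeneous.grad_dotProduct_X {n : ℕ} {φ : MvPolynomial (Fin 3) ℂ}
    (hφ : φ.IsHomogeneous n) : grad φ ⬝ᵥ (fun j => X j) = C (n : ℂ) * φ := by
  rw [map_natCast C n, ← nsmul_eq_mul, ← hφ.sum_X_mul_pderiv]
  simp only [grad, pd, dotProduct, mul_comm]

/-- Componentwise in the basis `(dy∧dz, dz∧dx, dx∧dy)`, where `Δ(dx∧dy∧dz) = (x, y, z)`. -/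
theorem jacobian_times_euler_contraction_general
    (k d m : ℕ) (hkd : m * k ≤ d)
    (q₁ q₂ h : MvPolynomial (Fin 3) ℂ)
    (hq₁ : q₁.IsHomogeneous k) (hq₂ : q₂.IsHomogeneous k)
    (hh : h.IsHomogeneous (d - m * k)) :
    ∀ i : Fin 3,
      jac q₁ q₂ h * X i
        = C (k : ℂ) *
            ((-(C (m : ℂ)) * h) * wedge2 q₁ q₂ i
              + (-q₂) * wedge2 q₁ h i + q₁ * wedge2 q₂ h i)
          + C (d : ℂ) * h * wedge2 q₁ q₂ i := by
  intro i
  have contraction := congrFun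
    (det_smul_eq_dotProduct_smul_cross (grad q₁) (grad q₂) (grad h) (fun j => X j)) i
  rw [← jac_eq_det_grad, hq₁.grad_dotProduct_X, hq₂.grad_dotProduct_X, hh.grad_dotProduct_X,
    ← cross_anticomm (grad q₁), ← wedge2_eq_cross_grad, ← wedge2_eq_cross_grad,
    ← wedge2_eq_cross_grad, Nat.cast_sub hkd] at contraction
  simp only [Pi.add_apply, Pi.smul_apply, Pi.neg_apply, smul_eq_mul, Nat.cast_mul, C_sub, C_mul]
    at contraction
  linear_combination contraction

/-- `J(q₁,q₂,h)·Δ(dx∧dy∧dz) = k·ω + d·h·dq₁∧dq₂`, where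
`ω = -mh·dq₁∧dq₂ - q₂·dq₁∧dh + q₁·dq₂∧dh`, stated componentwise in the
basis `(dy∧dz, dz∧dx, dx∧dy)` with `Δ(dx∧dy∧dz) = (x, y, z)`. -/
theorem jacobian_times_euler_contraction
    (k d m : ℕ) (hm : 2 ≤ m) (hkd : m * k ≤ d)
    (q₁ q₂ h : MvPolynomial (Fin 3) ℂ)
    (hq₁ : q₁.IsHomogeneous k) (hq₂ : q₂.IsHomogeneous k)
    (hh : h.IsHomogeneous (d - m * k)) :
    ∀ i : Fin 3,
      jac q₁ q₂ h * X i
        = C (k : ℂ) *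
            ((-(C (m : ℂ)) * h) * wedge2 q₁ q₂ i
              + (-q₂) * wedge2 q₁ h i + q₁ * wedge2 q₂ h i)
          + C (d : ℂ) * h * wedge2 q₁ q₂ i :=
  jacobian_times_euler_contraction_general k d m hkd q₁ q₂ h hq₁ hq₂ hh
end
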